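/- Let a, c, d, ω ∈ ℝ with a > 0, c > 0, and d ≥ 0, and let λ ∈ ℂ satisfy a λ² + (d + iω) λ + c = 0. Then Re λ ≤ 0. -/
import Mathlib


theorem scalar_quadratic_stability
    (a c d ω : ℝ) (ha : 0 < a) (hc : 0 < c) (hd : 0 ≤ d)
    (lam : ℂ)
    (h : (a : ℂ) * lam ^ 2 + ((d : ℂ) + (ω : ℂ) * Complex.I) * lam + (c : ℂ) = 0) :
    lam.re ≤ 0 := by
  rw [Complex.ext_iff] at h
  obtain ⟨h1, h2⟩ := h
  simp [Complex.add_re, Complex.add_im, Complex.mul_re, Complex.mul_im, pow_two] at h1 h2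
  set x := lam.re
  set y := lam.im
  have key : x * (a * (x ^ 2 + y ^ 2) + c) = -(d * (x ^ 2 + y ^ 2)) := by
    linear_combination x * h1 + y * h2
  have hpos : 0 < a * (x ^ 2 + y ^ 2) + c := by positivity
  have hnn : 0 ≤ d * (x ^ 2 + y ^ 2) := by positivity
  by_contra hx
  push_neg at hx
  nlinarith [mul_pos hx hpos]
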